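/- arXiv:0708.3854 — 3 statements merged into one kernel-verified Lean document; each statement's English description precedes it below -/
import Mathlib

section
/- With the notation of the eigenspace decomposition theorem: for each i, the projection from the null space of P = (E - λ₁)···(E - λ_p) onto the null space of E - λᵢ (along the other summands) is given by the operator Projᵢ = yᵢ · ∏_{j≠i} (E - λⱼ), where yᵢ = ∏_{j≠i} (λᵢ - λⱼ)⁻¹; that is, Projᵢ restricted to the null space of P is the identity on ker(E - λᵢ) and zero on ker(E - λⱼ) for j ≠ i. -/
open Polynomial

/-! The operator `Projᵢ` is `aeval E` of the Lagrange basis polynomial `Lᵢ` at the nodes `λⱼ`.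
On `ker (E - μ)` every polynomial in `E` acts as the scalar obtained by evaluating it at `μ`,
and `Lᵢ(λᵢ) = 1`, `Lᵢ(λⱼ) = 0` for `j ≠ i`. -/

theorem Module.End.aeval_apply_of_mem_ker_sub_smul {R M : Type*} [CommRing R] [AddCommGroup M]
    [Module R M] {f : Module.End R M} {μ : R} {x : M} (hx : x ∈ LinearMap.ker (f - μ • 1))
    (p : R[X]) : aeval f p x = p.eval μ • x := by
  rcases eq_or_ne x 0 with rfl | hx0
  · simp
  have hfx : f x = μ • x := sub_eq_zero.mp (by simpa using hx)
  exact aeval_apply_of_hasEigenvector ⟨mem_eigenspace_iff.mpr hfx, hx0⟩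

theorem Lagrange.basis_eq_C_nodalWeight_mul_nodal_erase {F ι : Type*} [Field F] [DecidableEq ι]
    (s : Finset ι) (v : ι → F) (i : ι) :
    Lagrange.basis s v i = C (nodalWeight s v i) * nodal (s.erase i) v := by
  simp_rw [Lagrange.basis, basisDivisor, nodalWeight, Finset.prod_mul_distrib, map_prod, nodal]

/-- **Theorem (projection formula).**
With `V` a vector space over a field `F`, `E : V → V` linear and `λ₁,…,λ_p` mutually distinct,
the projection from `ker((E-λ₁)⋯(E-λ_p))` onto `ker(E - λᵢ)` along the other summands is
`Projᵢ = yᵢ • ∏_{j≠i}(E - λⱼ)` with `yᵢ = ∏_{j≠i}(λᵢ - λⱼ)⁻¹`:  restricted to the null space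
of `P`, `Projᵢ` is the identity on `ker(E - λᵢ)` and zero on `ker(E - λⱼ)` for `j ≠ i`. -/
theorem projection_formula_for_distinct_factor_product
    {F V : Type*} [Field F] [AddCommGroup V] [Module F V]
    (E : Module.End F V) {p : ℕ} (lam : Fin p → F) (hlam : Function.Injective lam)
    (i : Fin p)
    (Proj : Module.End F V)
    (hProj : Proj = (∏ j ∈ Finset.univ.erase i, (lam i - lam j)⁻¹) •
        Polynomial.aeval E (∏ j ∈ Finset.univ.erase i, (X - C (lam j)))) :
    (∀ v : V, v ∈ LinearMap.ker (E - lam i • 1) → Proj v = v) ∧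
    (∀ j : Fin p, j ≠ i → ∀ v : V, v ∈ LinearMap.ker (E - lam j • 1) → Proj v = 0) := by
  have hProj_basis : Proj = aeval E (Lagrange.basis Finset.univ lam i) := by
    rw [hProj, Lagrange.basis_eq_C_nodalWeight_mul_nodal_erase, map_mul, aeval_C,
      ← Algebra.smul_def]
    rfl
  subst hProj_basis
  refine ⟨fun v hv => ?_, fun j hji v hv => ?_⟩
  · rw [Module.End.aeval_apply_of_mem_ker_sub_smul hv,
      Lagrange.eval_basis_self hlam.injOn (Finset.mem_univ i), one_smul]
  · rw [Module.End.aeval_apply_of_mem_ker_sub_smul hv,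
      Lagrange.eval_basis_of_ne hji.symm (Finset.mem_univ j), zero_smul]
end

section
/- Let d : A → B, δ : B → A be linear maps, let λ₁,…,λ_p be nonzero pairwise distinct scalars, and define G = δ ∘ ∏_{i=1}^{p} (dδ - λᵢ) : B → A, where dδ : B → B. Then ker(G) = ker(δ) ⊕ (⊕_{i=1}^{p} { f ∈ B : dδ f = λᵢ f }), an internal direct sum. -/
open Polynomial

private lemma aeval_apply_of_eigen {F B : Type*} [Field F] [AddCommGroup B] [Module F B]
    (T : Module.End F B) {μ : F} {x : B} (h : T x = μ • x) (q : F[X]) :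
    Polynomial.aeval T q x = q.eval μ • x := by
  have hpow : ∀ n : ℕ, (T ^ n) x = μ ^ n • x := by
    intro n
    induction n with
    | zero => simp
    | succ n ih =>
        simp [pow_succ, Module.End.mul_apply, h, ih, smul_smul, mul_comm]
  induction q using Polynomial.induction_on' with
  | add p q hp hq =>
      simp [map_add, LinearMap.add_apply, hp, hq, add_smul]
  | monomial n a =>
      simp [aeval_monomial, Module.End.mul_apply, Module.algebraMap_end_apply,
        hpow n, smul_smul, mul_comm]

/-- Let `d : A → B`, `δ : B → A` be linear and `λ₁,…,λ_p` nonzero pairwise distinct scalars.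
With `G = δ ∘ ∏ᵢ(dδ - λᵢ) : B → A`, the kernel of `G` is the internal direct sum of `ker δ`
and the eigenspaces `{f ∈ B | dδ f = λᵢ f}`. -/
theorem kernel_of_gauge_operator
    {F A B : Type*} [Field F] [AddCommGroup A] [Module F A] [AddCommGroup B] [Module F B]
    (d : A →ₗ[F] B) (δ : B →ₗ[F] A) {p : ℕ} (lam : Fin p → F)
    (hne : ∀ i, lam i ≠ 0) (hinj : Function.Injective lam)
    (G : B →ₗ[F] A)
    (hG : G = δ ∘ₗ
      (Polynomial.aeval (d ∘ₗ δ : Module.End F B) (∏ i : Fin p, (X - C (lam i))) :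
        Module.End F B)) :
    iSupIndep (fun i : Option (Fin p) =>
      Option.elim i (LinearMap.ker δ)
        (fun j => LinearMap.ker ((d ∘ₗ δ : Module.End F B) - lam j • 1))) ∧
    LinearMap.ker G =
      ⨆ i : Option (Fin p),
        Option.elim i (LinearMap.ker δ)
          (fun j => LinearMap.ker ((d ∘ₗ δ : Module.End F B) - lam j • 1)) := by
  classical
  set T : Module.End F B := (d ∘ₗ δ : Module.End F B) with hT
  set P : F[X] := ∏ i : Fin p, (X - C (lam i)) with hP
  set μ : Option (Fin p) → F := fun i => Option.elim i 0 lam with hμ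
  set S : Option (Fin p) → Submodule F B := fun i =>
    Option.elim i (LinearMap.ker δ)
      (fun j => LinearMap.ker (T - lam j • 1)) with hS
  have hμinj : Function.Injective μ := by
    intro a b hab
    match a, b with
    | none, none => rfl
    | none, some j => exact absurd hab.symm (hne j)
    | some j, none => exact absurd hab (hne j)
    | some i, some j => exact congrArg some (hinj hab)
  have hSle : ∀ i, S i ≤ Module.End.eigenspace T (μ i) := by
    intro i
    match i with
    | none =>
        intro x hx
        rw [Module.End.mem_eigenspace_iff]
        simp only [hS, Option.elim, LinearMap.mem_ker] at hx
        simp [hT, LinearMap.comp_apply, hx, hμ]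
    | some j =>
        rw [Module.End.eigenspace_def]
        exact le_rfl
  -- independence
  have hindep : iSupIndep S :=
    ((Module.End.eigenspaces_iSupIndep T).comp hμinj).mono hSle
  refine ⟨hindep, le_antisymm ?_ (iSup_le fun i => ?_)⟩
  · -- ker G ≤ ⨆ S
    intro x hx
    rw [LinearMap.mem_ker, hG, LinearMap.comp_apply] at hx
    have hsum : ∑ j : Option (Fin p), Lagrange.basis Finset.univ μ j = 1 :=
      Lagrange.sum_basis hμinj.injOn ⟨none, Finset.mem_univ _⟩
    have hx_eq : x = ∑ j : Option (Fin p),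
        Polynomial.aeval T (Lagrange.basis Finset.univ μ j) x := by
      have := congrArg (fun q : F[X] => Polynomial.aeval T q x) hsum
      simpa [map_sum, LinearMap.sum_apply] using this.symm
    -- basis as constant times product
    have hbasis : ∀ j : Option (Fin p),
        Lagrange.basis Finset.univ μ j =
          C (∏ k ∈ Finset.univ.erase j, (μ j - μ k)⁻¹) *
            ∏ k ∈ Finset.univ.erase j, (X - C (μ k)) := by
      intro j
      rw [Lagrange.basis]
      simp only [Lagrange.basisDivisor]
      rw [Finset.prod_mul_distrib, map_prod]
    -- the full nodal polynomial kills x after applying T once more / δ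
    have hPx : δ (Polynomial.aeval T P x) = 0 := hx
    have hnodal : ∏ k : Option (Fin p), (X - C (μ k)) = X * P := by
      rw [Fintype.prod_option]
      simp [hμ, hP]
    have hnodalx : Polynomial.aeval T (∏ k : Option (Fin p), (X - C (μ k))) x = 0 := by
      rw [hnodal, map_mul, aeval_X, Module.End.mul_apply]
      have : T (Polynomial.aeval T P x) = d (δ (Polynomial.aeval T P x)) := rfl
      rw [this, hPx, map_zero]
    have hmem : ∀ j : Option (Fin p),
        Polynomial.aeval T (Lagrange.basis Finset.univ μ j) x ∈ S j := by
      intro j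
      match j with
      | none =>
          -- erase none product equals P
          have herase : ∏ k ∈ Finset.univ.erase (none : Option (Fin p)), (X - C (μ k)) = P := by
            have h1 : (X - C (μ (none : Option (Fin p)))) *
                ∏ k ∈ Finset.univ.erase (none : Option (Fin p)), (X - C (μ k)) =
                ∏ k : Option (Fin p), (X - C (μ k)) :=
              Finset.mul_prod_erase Finset.univ (fun k => X - C (μ k)) (Finset.mem_univ _)
            have h2 : (X - C (μ (none : Option (Fin p)))) * P =
                ∏ k : Option (Fin p), (X - C (μ k)) := by
              rw [hnodal]; simp [hμ]
            have hXne : (X - C (μ (none : Option (Fin p)))) ≠ 0 := X_sub_C_ne_zero _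
            exact mul_left_cancel₀ hXne (h1.trans h2.symm)
          show _ ∈ LinearMap.ker δ
          rw [LinearMap.mem_ker, hbasis, herase, map_mul, aeval_C, Module.End.mul_apply,
            Module.algebraMap_end_apply, map_smul, hPx, smul_zero]
      | some j =>
          show _ ∈ LinearMap.ker (T - lam j • 1)
          rw [LinearMap.mem_ker]
          have key : (T - lam j • 1) (Polynomial.aeval T (Lagrange.basis Finset.univ μ (some j)) x)
              = Polynomial.aeval T ((X - C (μ (some j))) * Lagrange.basis Finset.univ μ (some j))
                  x := by
            rw [map_mul]
            have : Polynomial.aeval T (X - C (μ (some j))) = T - lam j • 1 := by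
              ext y
              simp [Module.algebraMap_end_apply, hμ]
            rw [this, Module.End.mul_apply]
          rw [key, hbasis, mul_left_comm, map_mul, aeval_C, Module.End.mul_apply,
            Module.algebraMap_end_apply,
            Finset.mul_prod_erase Finset.univ (fun k => X - C (μ k)) (Finset.mem_univ (some j)),
            hnodalx, smul_zero]
    rw [hx_eq]
    exact Submodule.sum_mem _ fun j _ => Submodule.mem_iSup_of_mem j (hmem j)
  · -- S i ≤ ker G
    intro x hx
    rw [LinearMap.mem_ker, hG, LinearMap.comp_apply]
    match i with
    | none =>
        simp only [hS, Option.elim, LinearMap.mem_ker] at hx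
        have hTx : T x = (0 : F) • x := by simp [hT, LinearMap.comp_apply, hx]
        rw [aeval_apply_of_eigen T hTx, map_smul, hx, smul_zero]
    | some j =>
        simp only [hS, Option.elim, LinearMap.mem_ker, LinearMap.sub_apply,
          LinearMap.smul_apply, Module.End.one_apply, sub_eq_zero] at hx
        have hTx : T x = lam j • x := hx
        rw [aeval_apply_of_eigen T hTx]
        have : P.eval (lam j) = 0 := by
          rw [hP]
          simp only [eval_prod, eval_sub, eval_X, eval_C]
          exact Finset.prod_eq_zero (Finset.mem_univ j) (by simp)
        rw [this, zero_smul, map_zero]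
end

section
/- In the setting of the previous statement, suppose additionally d' : B → C is linear with d'∘d = 0 and each eigenspace { f ∈ B : dδf = λᵢf } (λᵢ ≠ 0) lies in the range of d. Then ker(G) ∩ ker(d') = (ker(δ) ∩ ker(d')) ⊕ (⊕_{i=1}^{p} { f ∈ B : dδ f = λᵢ f }). -/
open Polynomial Finset

private lemma X_sub_C_mul_lagrange_basis {F : Type*} [Field F] {ι : Type*} [DecidableEq ι]
    (s : Finset ι) (v : ι → F) (i : ι) (hi : i ∈ s) :
    (X - C (v i)) * Lagrange.basis s v i =
      C (∏ j ∈ s.erase i, (v i - v j)⁻¹) * Lagrange.nodal s v := by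
  rw [Lagrange.basis, Lagrange.nodal_eq_mul_nodal_erase hi]
  simp only [Lagrange.basisDivisor, Lagrange.nodal]
  rw [Finset.prod_mul_distrib, map_prod]
  ring

/-- In the setting of the gauge-operator kernel decomposition, suppose additionally
`d' : B → C` is linear with `d'∘d = 0` and each eigenspace `{f | dδf = λᵢf}` (with `λᵢ ≠ 0`)
lies in the range of `d`.  Then
`ker(G) ∩ ker(d') = (ker(δ) ∩ ker(d')) ⊕ (⊕ᵢ {f | dδ f = λᵢ f})`. -/
theorem conformal_harmonics_decomposition
    {F A B W : Type*} [Field F] [AddCommGroup A] [Module F A] [AddCommGroup B] [Module F B]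
    [AddCommGroup W] [Module F W]
    (d : A →ₗ[F] B) (δ : B →ₗ[F] A) (d' : B →ₗ[F] W)
    (hdd : d' ∘ₗ d = 0)
    {p : ℕ} (lam : Fin p → F) (hne : ∀ i, lam i ≠ 0) (hinj : Function.Injective lam)
    (heig : ∀ i, LinearMap.ker ((d ∘ₗ δ : Module.End F B) - lam i • 1) ≤ LinearMap.range d)
    (G : B →ₗ[F] A)
    (hG : G = δ ∘ₗ
      (Polynomial.aeval (d ∘ₗ δ : Module.End F B) (∏ i : Fin p, (X - C (lam i))) :
        Module.End F B)) :
    iSupIndep (fun i : Option (Fin p) =>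
      Option.elim i (LinearMap.ker δ ⊓ LinearMap.ker d')
        (fun j => LinearMap.ker ((d ∘ₗ δ : Module.End F B) - lam j • 1))) ∧
    LinearMap.ker G ⊓ LinearMap.ker d' =
      (LinearMap.ker δ ⊓ LinearMap.ker d') ⊔
        ⨆ j : Fin p, LinearMap.ker ((d ∘ₗ δ : Module.End F B) - lam j • 1) := by
  classical
  set T : Module.End F B := (d ∘ₗ δ : Module.End F B) with hT
  set q : F[X] := ∏ i : Fin p, (X - C (lam i)) with hq
  set μ : Option (Fin p) → F := fun o => o.elim 0 lam with hμ
  have hμnone : μ none = 0 := rfl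
  have hμsome : ∀ i, μ (some i) = lam i := fun i => rfl
  have hμinj : Function.Injective μ := by
    rintro (_ | i) (_ | j) h
    · rfl
    · exact absurd ((hμnone ▸ hμsome j ▸ h).symm) (hne j)
    · exact absurd (hμnone ▸ hμsome i ▸ h) (hne i)
    · rw [hμsome i, hμsome j] at h
      rw [hinj h]
  have haevalXC : ∀ c : F, (aeval T (X - C c) : Module.End F B) = T - c • 1 := by
    intro c
    rw [map_sub, aeval_X, aeval_C, Module.algebraMap_end_eq_smul_id]
    rfl
  have hGapp : ∀ f : B, G f = δ ((aeval T q) f) := by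
    intro f; rw [hG]; rfl
  -- nodal polynomial over all of `Option (Fin p)` is `X * q`
  have hnodal : Lagrange.nodal (univ : Finset (Option (Fin p))) μ = X * q := by
    rw [Lagrange.nodal_eq, Fintype.prod_option, hμnone]
    simp [hq, hμsome]
  have herase : ∏ j ∈ (univ : Finset (Option (Fin p))).erase none, (X - C (μ j)) = q := by
    have h1 : (X - C (μ none)) * ∏ j ∈ (univ : Finset (Option (Fin p))).erase none,
        (X - C (μ j)) = X * q :=
      (Finset.mul_prod_erase (univ : Finset (Option (Fin p)))
        (fun j => X - C (μ j)) (mem_univ none)).trans (by rw [← Lagrange.nodal_eq, hnodal])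
    rw [hμnone, map_zero, sub_zero] at h1
    exact mul_left_cancel₀ (X_ne_zero) h1
  -- if `G f = 0`, the nodal polynomial annihilates `f`
  have hNf : ∀ f : B, G f = 0 → (aeval T (Lagrange.nodal (univ : Finset (Option (Fin p))) μ)) f
      = 0 := by
    intro f hf
    have h0 : δ ((aeval T q) f) = 0 := by rw [← hGapp f]; exact hf
    rw [hnodal, map_mul, aeval_X, Module.End.mul_apply]
    show (d ∘ₗ δ) ((aeval T q) f) = 0
    rw [LinearMap.comp_apply, h0, map_zero]
  -- the Lagrange pieces sum to `f`
  have hsum : ∀ f : B, ∑ j : Option (Fin p),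
      (aeval T (Lagrange.basis (univ : Finset (Option (Fin p))) μ j)) f = f := by
    intro f
    have h1 : ∑ j ∈ (univ : Finset (Option (Fin p))), Lagrange.basis univ μ j = 1 :=
      Lagrange.sum_basis hμinj.injOn ⟨none, mem_univ none⟩
    rw [← LinearMap.sum_apply, ← map_sum, h1, map_one, Module.End.one_apply]
  -- each Lagrange piece is an eigenvector
  have heigj : ∀ f : B, G f = 0 → ∀ j : Option (Fin p),
      (T - μ j • 1) ((aeval T (Lagrange.basis (univ : Finset (Option (Fin p))) μ j)) f) = 0 := by
    intro f hf j
    have h2 := congrArg (fun P : F[X] => (aeval T P) f)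
      (X_sub_C_mul_lagrange_basis univ μ j (mem_univ j))
    simp only [map_mul, Module.End.mul_apply, haevalXC, aeval_C] at h2
    rw [h2, hNf f hf, map_zero]
  -- the `none` piece is in `ker δ`
  have hbasisnone : Lagrange.basis (univ : Finset (Option (Fin p))) μ none =
      C (∏ j ∈ (univ : Finset (Option (Fin p))).erase none, (μ none - μ j)⁻¹) * q := by
    rw [Lagrange.basis]
    simp only [Lagrange.basisDivisor]
    rw [Finset.prod_mul_distrib, map_prod, herase]
  have hδnone : ∀ f : B, G f = 0 →
      δ ((aeval T (Lagrange.basis (univ : Finset (Option (Fin p))) μ none)) f) = 0 := by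
    intro f hf
    rw [hbasisnone, map_mul, Module.End.mul_apply, aeval_C, Module.algebraMap_end_apply,
      map_smul, ← hGapp f, hf, smul_zero]
  -- eigenvectors of nonzero eigenvalues are killed by `d'`
  have hd'eig : ∀ (i : Fin p) (g : B), g ∈ LinearMap.ker (T - lam i • 1) → d' g = 0 := by
    intro i g hg
    obtain ⟨a, ha⟩ := heig i hg
    rw [← ha, ← LinearMap.comp_apply, hdd, LinearMap.zero_apply]
  -- eigenvectors are killed by `G`
  have heigkerG : ∀ (i : Fin p) (g : B), (T - lam i • 1) g = 0 → G g = 0 := by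
    intro i g hg
    have hq' : q = (∏ j ∈ (univ : Finset (Fin p)).erase i, (X - C (lam j))) *
        (X - C (lam i)) := by
      rw [hq, ← Finset.mul_prod_erase (univ : Finset (Fin p))
        (fun j => X - C (lam j)) (mem_univ i), mul_comm]
    rw [hGapp g, hq', map_mul, Module.End.mul_apply, haevalXC, hg, map_zero, map_zero]
  -- `ker δ` is killed by `G`
  have hkerδ : ∀ g : B, δ g = 0 → G g = 0 := by
    intro g hg
    have hTg : T g = 0 := by
      rw [hT]
      show d (δ g) = 0
      rw [hg, map_zero]
    have haq : (aeval T q) g = q.coeff 0 • g := by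
      conv_lhs => rw [← Polynomial.X_mul_divX_add q, mul_comm X q.divX]
      rw [map_add, map_mul, aeval_X, aeval_C, LinearMap.add_apply, Module.End.mul_apply,
        hTg, map_zero, zero_add, Module.algebraMap_end_apply]
    rw [hGapp g, haq, map_smul, hg, smul_zero]
  constructor
  · -- independence
    have h1 : iSupIndep (fun o : Option (Fin p) => T.eigenspace (μ o)) :=
      (Module.End.eigenspaces_iSupIndep T).comp hμinj
    refine h1.mono ?_
    rintro (_ | j)
    · intro g hg
      obtain ⟨hg1, _⟩ := Submodule.mem_inf.mp hg
      rw [Module.End.mem_eigenspace_iff, hμnone, zero_smul]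
      show (d ∘ₗ δ) g = 0
      rw [LinearMap.comp_apply, hg1, map_zero]
    · intro g hg
      have hg' : (T - lam j • 1) g = 0 := hg
      rw [Module.End.mem_eigenspace_iff, hμsome j]
      have : T g - lam j • g = 0 := by
        simpa [LinearMap.sub_apply, LinearMap.smul_apply, Module.End.one_apply] using hg'
      exact sub_eq_zero.mp this
  · -- the decomposition of `ker G ⊓ ker d'`
    apply le_antisymm
    · intro f hf
      obtain ⟨hfG, hfd'⟩ := Submodule.mem_inf.mp hf
      have hfG' : G f = 0 := hfG
      have hfd'' : d' f = 0 := hfd'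
      have hdecomp := hsum f
      rw [Fintype.sum_option] at hdecomp
      have hfi : ∀ i : Fin p, (aeval T (Lagrange.basis (univ : Finset (Option (Fin p))) μ
          (some i))) f ∈ LinearMap.ker (T - lam i • 1) := by
        intro i
        exact LinearMap.mem_ker.mpr (by simpa [hμsome i] using heigj f hfG' (some i))
      have hfn_δ : δ ((aeval T (Lagrange.basis (univ : Finset (Option (Fin p))) μ none)) f)
          = 0 := hδnone f hfG'
      have hfn_d' : d' ((aeval T (Lagrange.basis (univ : Finset (Option (Fin p))) μ none)) f)
          = 0 := by
        have h3 : d' f = d' ((aeval T (Lagrange.basis univ μ none)) f) +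
            ∑ i : Fin p, d' ((aeval T (Lagrange.basis univ μ (some i))) f) := by
          rw [← map_sum, ← map_add, hdecomp]
        have h4 : ∀ i : Fin p, d' ((aeval T (Lagrange.basis (univ : Finset (Option (Fin p)))
            μ (some i))) f) = 0 := fun i => hd'eig i _ (hfi i)
        rw [hfd'', Finset.sum_congr rfl (fun i _ => h4 i), Finset.sum_const_zero, add_zero]
          at h3
        exact h3.symm
      rw [← hdecomp]
      refine Submodule.add_mem _ ?_ ?_
      · exact Submodule.mem_sup_left (Submodule.mem_inf.mpr ⟨hfn_δ, hfn_d'⟩)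
      · exact Submodule.sum_mem _ fun i _ =>
          Submodule.mem_sup_right (Submodule.mem_iSup_of_mem i (hfi i))
    · apply sup_le
      · intro g hg
        obtain ⟨hg1, hg2⟩ := Submodule.mem_inf.mp hg
        exact Submodule.mem_inf.mpr ⟨LinearMap.mem_ker.mpr (hkerδ g hg1), hg2⟩
      · refine iSup_le fun j => ?_
        intro g hg
        have hg' : (T - lam j • 1) g = 0 := hg
        exact Submodule.mem_inf.mpr ⟨LinearMap.mem_ker.mpr (heigkerG j g hg'),
          LinearMap.mem_ker.mpr (hd'eig j g hg)⟩
end
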